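/- arXiv:1508.03200 — 4 statements merged into one kernel-verified Lean document; each statement's English description precedes it below -/
import Mathlib

section
/- (Zhukovskii stability test for the Hill equation.) Let T > 0, let n ∈ ℕ, and let q : ℝ → ℝ be continuous and T-periodic with n²π²/T² < q(t) < (n+1)²π²/T² for all t ∈ ℝ. Then the Hill equation z'' + q(t)z = 0 is strongly stable; in particular, every C² solution z : ℝ → ℝ of z''(t) + q(t)z(t) = 0 is bounded on ℝ. -/
/-!
By Sturm comparison with `sin (ω (t - c))`, the bounds on `q` keep consecutive zeros of a
nontrivial solution more than `T / (n + 1)` and less than `T / n` apart. The zeros of a solution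
with `z (t + T) = c z t` are `T`-periodic, so one period would consist of `m` such gaps with
`n < m < n + 1`: the monodromy has no real eigenvalue. Its determinant is `1` because the
Wronskian is constant, so every solution satisfies `z (t + 2T) = b z (t + T) - z t` with
`b² < 4`; then the positive definite form `z(t)² - b z(t) z(t + T) + z(t + T)²` is
`T`-periodic, hence bounded, and so is `z`. The bounds on `q` survive small perturbations
because a continuous periodic `q` attains its extrema.
-/

/-- Strong stability of the scalar Hill equation `z'' + q(t) z = 0`:
every `C²` solution is bounded on `ℝ`, and the same holds for every continuous
`T`-periodic perturbation `q̃` with `sup_t |q̃(t) − q(t)| < η`. -/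
def StronglyStableHill (T : ℝ) (q : ℝ → ℝ) : Prop :=
  (∀ z : ℝ → ℝ, ContDiff ℝ 2 z → (∀ t, deriv (deriv z) t + q t * z t = 0) →
      ∃ C, ∀ t, |z t| ≤ C) ∧
  ∃ η > 0, ∀ q' : ℝ → ℝ, Continuous q' → (∀ t, q' (t + T) = q' t) →
    (∀ t, |q' t - q t| < η) →
    ∀ z : ℝ → ℝ, ContDiff ℝ 2 z → (∀ t, deriv (deriv z) t + q' t * z t = 0) →
      ∃ C, ∀ t, |z t| ≤ C

open Set Filter Topology Function Real

theorem HasDerivAt.nonneg_of_eq_zero_of_pos_on_Ioo {f : ℝ → ℝ} {f' c d : ℝ}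
    (hf : HasDerivAt f f' c) (hfc : f c = 0) (hcd : c < d) (hpos : ∀ t ∈ Ioo c d, 0 < f t) :
    0 ≤ f' := by
  refine ge_of_tendsto hf.tendsto_slope_zero_right ?_
  filter_upwards [Ioo_mem_nhdsGT (sub_pos.2 hcd)] with t ht
  rw [hfc, sub_zero, smul_eq_mul]
  exact (mul_pos (inv_pos.2 ht.1) (hpos _ ⟨by linarith [ht.1], by linarith [ht.2]⟩)).le

theorem HasDerivAt.nonpos_of_eq_zero_of_pos_on_Ioo {f : ℝ → ℝ} {f' c d : ℝ}
    (hf : HasDerivAt f f' d) (hfd : f d = 0) (hcd : c < d) (hpos : ∀ t ∈ Ioo c d, 0 < f t) :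
    f' ≤ 0 := by
  refine le_of_tendsto hf.tendsto_slope_zero_left ?_
  filter_upwards [Ioo_mem_nhdsLT (sub_neg.2 hcd)] with t ht
  rw [hfd, sub_zero, smul_eq_mul]
  exact (mul_neg_of_neg_of_pos (inv_lt_zero.2 ht.2)
    (hpos _ ⟨by linarith [ht.1], by linarith [ht.2]⟩)).le

theorem Continuous.nonneg_on_Icc_of_pos_on_Ioo {f : ℝ → ℝ} (hf : Continuous f) {c d : ℝ}
    (hcd : c < d) (hpos : ∀ t ∈ Ioo c d, 0 < f t) : ∀ t ∈ Icc c d, 0 ≤ f t := by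
  rw [← closure_Ioo hcd.ne]
  exact (isClosed_le continuous_const hf).closure_subset_iff.2 fun t ht => (hpos t ht).le

theorem IsPreconnected.forall_pos_or_forall_neg {α : Type*} [TopologicalSpace α]
    {s : Set α} {f : α → ℝ} (hs : IsPreconnected s) (hf : ContinuousOn f s)
    (h : ∀ t ∈ s, f t ≠ 0) : (∀ t ∈ s, 0 < f t) ∨ ∀ t ∈ s, f t < 0 := by
  by_contra! ⟨⟨a, ha, hfa⟩, ⟨b, hb, hfb⟩⟩
  obtain ⟨t, ht, hft⟩ := hs.intermediate_value ha hb hf ⟨hfa, hfb⟩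
  exact h t ht hft

theorem IsClosed.exists_isLeast_inter_Ioi {Z : Set ℝ} (hZ : IsClosed Z) {x : ℝ}
    (hx : ∀ᶠ t in 𝓝[>] x, t ∉ Z) (hne : (Z ∩ Ioi x).Nonempty) :
    ∃ y, IsLeast (Z ∩ Ioi x) y := by
  obtain ⟨u, hxu, hsub⟩ := mem_nhdsGT_iff_exists_Ioo_subset.1 hx
  have hZu : Z ∩ Ioi x = Z ∩ Ici u := Set.ext fun t =>
    ⟨fun ⟨htZ, htx⟩ => ⟨htZ, not_lt.1 fun htu => hsub ⟨htx, htu⟩ htZ⟩,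
      fun ⟨htZ, htu⟩ => ⟨htZ, mem_Ioi.2 (hxu.trans_le htu)⟩⟩
  rw [hZu] at hne ⊢
  exact ⟨_, (hZ.inter isClosed_Ici).isLeast_csInf hne ⟨u, fun t ht => ht.2⟩⟩

theorem exists_nat_mul_lt_sub_lt_mul {Z : Set ℝ} {α β : ℝ} (hα : 0 < α)
    (hsucc : ∀ x ∈ Z, ∃ y, IsLeast (Z ∩ Ioi x) y)
    (hgap : ∀ x ∈ Z, ∀ y, IsLeast (Z ∩ Ioi x) y → α < y - x ∧ y - x < β)
    {x y : ℝ} (hx : x ∈ Z) (hy : y ∈ Z) (hxy : x < y) :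
    ∃ m : ℕ, 0 < m ∧ m * α < y - x ∧ y - x < m * β := by
  obtain ⟨N, hN⟩ := Archimedean.arch (y - x) hα
  induction N generalizing x with
  | zero => rw [zero_smul] at hN; linarith
  | succ N ih =>
    obtain ⟨s, hs⟩ := hsucc x hx
    obtain ⟨hαs, hβs⟩ := hgap x hx s hs
    rcases (hs.2 ⟨hy, hxy⟩ : s ≤ y).lt_or_eq with hsy | rfl
    · obtain ⟨m, -, hlo, hhi⟩ := ih hs.1.1 hsy (by rw [succ_nsmul] at hN; linarith)
      exact ⟨m + 1, m.succ_pos, by push_cast; linarith, by push_cast; linarith⟩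
    · exact ⟨1, one_pos, by simpa using hαs, by simpa using hβs⟩

theorem Function.Periodic.exists_pos_add_lt_and_lt_sub {q : ℝ → ℝ} {T a b : ℝ}
    (hp : Periodic q T) (hT : T ≠ 0) (hq : Continuous q) (h : ∀ t, a < q t ∧ q t < b) :
    ∃ η > 0, ∀ t, a + η < q t ∧ q t < b - η := by
  have hK := hp.compact_of_continuous hT hq
  obtain ⟨_, ⟨t₁, rfl⟩, hmin⟩ := hK.exists_isLeast (range_nonempty q)
  obtain ⟨_, ⟨t₂, rfl⟩, hmax⟩ := hK.exists_isGreatest (range_nonempty q)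
  refine ⟨min (q t₁ - a) (b - q t₂) / 2, by simp [(h t₁).1, (h t₂).2], fun t => ?_⟩
  constructor <;> linarith [hmin (mem_range_self t), hmax (mem_range_self t),
    min_le_left (q t₁ - a) (b - q t₂), min_le_right (q t₁ - a) (b - q t₂), (h t₁).1, (h t₂).2]

/-- The quadratic form `x² - b x y + y²` is invariant under `(x, y) ↦ (y, b y - x)` and
positive definite when `b² < 4`. -/
theorem exists_abs_le_of_recurrence {f : ℝ → ℝ} {T b : ℝ} (hT : T ≠ 0) (hf : Continuous f)
    (hb : b ^ 2 < 4) (hrec : ∀ t, f (t + T + T) = b * f (t + T) - f t) :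
    ∃ C, ∀ t, |f t| ≤ C := by
  set Φ := fun t => f t ^ 2 - b * f t * f (t + T) + f (t + T) ^ 2
  have hΦ : Periodic Φ T := fun t => by
    simp only [Φ, hrec]
    ring
  obtain ⟨C, hC⟩ := isBounded_iff_forall_norm_le.mp
    (hΦ.isBounded_of_continuous hT (by fun_prop))
  refine ⟨√(4 * C / (4 - b ^ 2)), fun t => Real.abs_le_sqrt ?_⟩
  have hΦC : Φ (t - T) ≤ C := (le_abs_self _).trans (hC _ (mem_range_self _))
  rw [le_div_iff₀ (by linarith)]
  have : 4 * Φ (t - T) = (2 * f (t - T) - b * f t) ^ 2 + (4 - b ^ 2) * f t ^ 2 := by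
    simp only [Φ, sub_add_cancel]
    ring
  nlinarith [sq_nonneg (2 * f (t - T) - b * f t)]

theorem exists_floquet_of_recurrence {f : ℝ → ℝ} {T b : ℝ} (hb : 4 ≤ b ^ 2)
    (hrec : ∀ t, f (t + T + T) = b * f (t + T) - f t) :
    ∃ μ c : ℝ, ∀ t, f (t + T + T) - μ * f (t + T) = c * (f (t + T) - μ * f t) := by
  have hs := Real.sq_sqrt (sub_nonneg.mpr hb)
  refine ⟨(b - √(b ^ 2 - 4)) / 2, (b + √(b ^ 2 - 4)) / 2, fun t => ?_⟩
  rw [hrec]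
  linear_combination (-f t / 4) * hs

theorem hasDerivAt_sin_mul_sub (ω c t : ℝ) :
    HasDerivAt (fun s => sin (ω * (s - c))) (ω * cos (ω * (t - c))) t :=
  (((hasDerivAt_id' t).sub_const c).const_mul ω).sin.congr_deriv (by ring)

theorem hasDerivAt_mul_cos_mul_sub (ω c t : ℝ) :
    HasDerivAt (fun s => ω * cos (ω * (s - c))) (-(ω ^ 2 * sin (ω * (t - c)))) t :=
  ((((hasDerivAt_id' t).sub_const c).const_mul ω).cos.const_mul ω).congr_deriv (by ring)

theorem sin_mul_sub_pos {ω c t : ℝ} (hω : 0 < ω) (ht : t ∈ Ioo c (c + π / ω)) :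
    0 < sin (ω * (t - c)) :=
  sin_pos_of_pos_of_lt_pi (mul_pos hω (sub_pos.2 ht.1))
    ((lt_div_iff₀' hω).1 (by linarith [ht.2]))

/-- The Wronskian `u' v - u v'` increases strictly on `[c, d]`, yet it is `≥ 0` at `c` and
`≤ 0` at `d`. -/
theorem sturm_comparison {q₁ q₂ u u' v v' : ℝ → ℝ} {c d : ℝ} (hcd : c < d)
    (hu : ∀ t, HasDerivAt u (u' t) t) (hu' : ∀ t, HasDerivAt u' (-(q₁ t * u t)) t)
    (hv : ∀ t, HasDerivAt v (v' t) t) (hv' : ∀ t, HasDerivAt v' (-(q₂ t * v t)) t)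
    (hq : ∀ t ∈ Ioo c d, q₁ t < q₂ t) (huc : u c = 0) (hud : u d = 0)
    (hupos : ∀ t ∈ Ioo c d, 0 < u t) (hvpos : ∀ t ∈ Ioo c d, 0 < v t) : False := by
  set W := fun t => u' t * v t - u t * v' t
  have hW : ∀ t, HasDerivAt W ((q₂ t - q₁ t) * u t * v t) t := fun t =>
    (((hu' t).mul (hv t)).sub ((hu t).mul (hv' t))).congr_deriv (by ring)
  have hmono : StrictMonoOn W (Icc c d) :=
    strictMonoOn_of_deriv_pos (convex_Icc c d) (fun t _ => (hW t).continuousAt.continuousWithinAt)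
      fun t ht => by
        rw [interior_Icc] at ht
        rw [(hW t).deriv]
        exact mul_pos (mul_pos (sub_pos.2 (hq t ht)) (hupos t ht)) (hvpos t ht)
  have hWcd := hmono (left_mem_Icc.2 hcd.le) (right_mem_Icc.2 hcd.le) hcd
  simp only [W, huc, hud, zero_mul, sub_zero] at hWcd
  have hv0 := (continuous_iff_continuousAt.2 fun t => (hv t).continuousAt)
    |>.nonneg_on_Icc_of_pos_on_Ioo hcd hvpos
  have hu'c := (hu c).nonneg_of_eq_zero_of_pos_on_Ioo huc hcd hupos
  have hu'd := (hu d).nonpos_of_eq_zero_of_pos_on_Ioo hud hcd hupos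
  nlinarith [mul_nonneg hu'c (hv0 c (left_mem_Icc.2 hcd.le)),
    mul_nonpos_of_nonpos_of_nonneg hu'd (hv0 d (right_mem_Icc.2 hcd.le))]

namespace Hill

structure IsSolution (q z : ℝ → ℝ) : Prop where
  contDiff : ContDiff ℝ 2 z
  deriv_deriv_add_mul : ∀ t, deriv (deriv z) t + q t * z t = 0

variable {q z w : ℝ → ℝ}

noncomputable def wronskian (z w : ℝ → ℝ) (t : ℝ) : ℝ := z t * deriv w t - deriv z t * w t

theorem wronskian_comp_add_const (z w : ℝ → ℝ) (c t : ℝ) :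
    wronskian (fun t => z (t + c)) (fun t => w (t + c)) t = wronskian z w (t + c) := by
  simp only [wronskian, deriv_comp_add_const]

namespace IsSolution

theorem differentiable (hz : IsSolution q z) : Differentiable ℝ z :=
  hz.contDiff.differentiable (by norm_num)

theorem differentiable_deriv (hz : IsSolution q z) : Differentiable ℝ (deriv z) :=
  (hz.contDiff.iterate_deriv' 1 1).differentiable (by norm_num)

theorem continuous (hz : IsSolution q z) : Continuous z := hz.differentiable.continuous

theorem hasDerivAt (hz : IsSolution q z) (t : ℝ) : HasDerivAt z (deriv z t) t :=
  (hz.differentiable t).hasDerivAt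

theorem hasDerivAt_deriv (hz : IsSolution q z) (t : ℝ) :
    HasDerivAt (deriv z) (-(q t * z t)) t := by
  rw [← eq_neg_of_add_eq_zero_left (hz.deriv_deriv_add_mul t)]
  exact (hz.differentiable_deriv t).hasDerivAt

theorem of_hasDerivAt_deriv (hz : ContDiff ℝ 2 z)
    (h : ∀ t, HasDerivAt (deriv z) (-(q t * z t)) t) : IsSolution q z :=
  ⟨hz, fun t => by rw [(h t).deriv]; ring⟩

theorem add (hz : IsSolution q z) (hw : IsSolution q w) : IsSolution q (z + w) := by
  refine of_hasDerivAt_deriv (hz.contDiff.add hw.contDiff) fun t => ?_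
  have hd : deriv (z + w) = deriv z + deriv w :=
    funext fun s => ((hz.hasDerivAt s).add (hw.hasDerivAt s)).deriv
  rw [hd]
  exact ((hz.hasDerivAt_deriv t).add (hw.hasDerivAt_deriv t)).congr_deriv
    (by simp only [Pi.add_apply]; ring)

theorem const_smul (hz : IsSolution q z) (c : ℝ) : IsSolution q (c • z) := by
  refine of_hasDerivAt_deriv (hz.contDiff.const_smul c) fun t => ?_
  have hd : deriv (c • z) = c • deriv z :=
    funext fun s => ((hz.hasDerivAt s).const_smul c).deriv
  rw [hd]
  exact ((hz.hasDerivAt_deriv t).const_smul c).congr_deriv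
    (by simp only [Pi.smul_apply, smul_eq_mul]; ring)

theorem neg (hz : IsSolution q z) : IsSolution q (-z) := by
  simpa using hz.const_smul (-1)

theorem sub (hz : IsSolution q z) (hw : IsSolution q w) : IsSolution q (z - w) := by
  simpa [sub_eq_add_neg] using hz.add hw.neg

theorem comp_add_const {c : ℝ} (hz : IsSolution q z) (hq : Periodic q c) :
    IsSolution q (fun t => z (t + c)) := by
  refine ⟨hz.contDiff.comp (contDiff_id.add contDiff_const), fun t => ?_⟩
  have hd : deriv (fun t => z (t + c)) = fun t => deriv z (t + c) :=
    funext fun s => deriv_comp_add_const z c s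
  rw [hd, deriv_comp_add_const (deriv z) c t, ← hq t]
  exact hz.deriv_deriv_add_mul (t + c)

/-- Uniqueness for the first-order system `(x, y)' = (y, -q x)`, whose vector field is
Lipschitz on compact time intervals. -/
theorem eq_zero_of_eq_zero_of_deriv_eq_zero (hq : Continuous q) (hz : IsSolution q z) {t₀ : ℝ}
    (h₀ : z t₀ = 0) (h₁ : deriv z t₀ = 0) : z = 0 := by
  funext t
  obtain ⟨a, b, ht₀, ht⟩ : ∃ a b, t₀ ∈ Ioo a b ∧ t ∈ Icc a b :=
    ⟨min t t₀ - 1, max t t₀ + 1, ⟨by linarith [min_le_right t t₀], by linarith [le_max_right t t₀]⟩,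
      ⟨by linarith [min_le_left t t₀], by linarith [le_max_left t t₀]⟩⟩
  obtain ⟨M, hM⟩ := (isCompact_Icc (a := a) (b := b)).exists_bound_of_continuousOn hq.continuousOn
  let v : ℝ → ℝ × ℝ → ℝ × ℝ := fun s p => (p.2, -q s • p.1)
  have hv : ∀ s ∈ Ioo a b, LipschitzOnWith (max 1 ‖M‖₊) (v s) univ := by
    intro s hs
    have hqs : ‖-q s‖₊ * 1 ≤ ‖M‖₊ := by
      rw [mul_one, ← NNReal.coe_le_coe, coe_nnnorm, coe_nnnorm, norm_neg]
      exact (hM s (Ioo_subset_Icc_self hs)).trans (le_abs_self M)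
    exact ((LipschitzWith.prod_snd.prodMk ((lipschitzWith_smul (-q s)).comp
      LipschitzWith.prod_fst)).weaken (max_le_max le_rfl hqs)).lipschitzOnWith
  have hf : ∀ s, HasDerivAt (fun s => (z s, deriv z s)) (v s (z s, deriv z s)) s := fun s => by
    simpa [v] using (hz.hasDerivAt s).prodMk (hz.hasDerivAt_deriv s)
  have h0 : ∀ s, HasDerivAt (fun _ => (0 : ℝ × ℝ)) (v s 0) s := fun s =>
    (hasDerivAt_const s (0 : ℝ × ℝ)).congr_deriv (by simp [v]; rfl)
  have hEq := ODE_solution_unique_of_mem_Icc hv ht₀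
    (fun s _ => (hf s).continuousAt.continuousWithinAt) (fun s _ => hf s) (fun _ _ => mem_univ _)
    continuousOn_const (fun s _ => h0 s) (fun _ _ => mem_univ _) (by simp [h₀, h₁])
  simpa using congrArg Prod.fst (hEq ht)

theorem eq_of_eq_of_deriv_eq (hq : Continuous q) (hz : IsSolution q z) (hw : IsSolution q w)
    {t₀ : ℝ} (h₀ : z t₀ = w t₀) (h₁ : deriv z t₀ = deriv w t₀) : z = w := by
  refine sub_eq_zero.mp ((hz.sub hw).eq_zero_of_eq_zero_of_deriv_eq_zero hq (t₀ := t₀)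
    (by simp [h₀]) ?_)
  rw [((hz.hasDerivAt t₀).sub (hw.hasDerivAt t₀)).deriv, h₁, sub_self]

theorem wronskian_eq (hz : IsSolution q z) (hw : IsSolution q w) (s t : ℝ) :
    wronskian z w s = wronskian z w t := by
  have h : ∀ t, HasDerivAt (wronskian z w) 0 t := fun t =>
    (((hz.hasDerivAt t).mul (hw.hasDerivAt_deriv t)).sub
      ((hz.hasDerivAt_deriv t).mul (hw.hasDerivAt t))).congr_deriv (by ring)
  exact is_const_of_deriv_eq_zero (fun t => (h t).differentiableAt) (fun t => (h t).deriv) s t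

/-- Cramer's rule. -/
theorem eq_wronskian_div_smul_add (hq : Continuous q) (hz : IsSolution q z) (hw : IsSolution q w)
    {y : ℝ → ℝ} (hy : IsSolution q y) {t₀ : ℝ} (hD : wronskian z w t₀ ≠ 0) :
    y = (wronskian y w t₀ / wronskian z w t₀) • z + (wronskian z y t₀ / wronskian z w t₀) • w := by
  refine hy.eq_of_eq_of_deriv_eq hq ((hz.const_smul _).add (hw.const_smul _)) (t₀ := t₀) ?_ ?_
  · simp only [Pi.add_apply, Pi.smul_apply, smul_eq_mul]
    field_simp
    simp only [wronskian]
    ring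
  · rw [(((hz.hasDerivAt t₀).const_smul _).add ((hw.hasDerivAt t₀).const_smul _)).deriv]
    simp only [smul_eq_mul]
    field_simp
    simp only [wronskian]
    ring

theorem exists_eq_smul_of_wronskian_eq_zero (hq : Continuous q) (hz : IsSolution q z)
    (hw : IsSolution q w) (hz0 : z ≠ 0) {t₀ : ℝ} (hW : wronskian z w t₀ = 0) :
    ∃ c : ℝ, w = c • z := by
  have hN : z t₀ ^ 2 + deriv z t₀ ^ 2 ≠ 0 := by
    intro hN
    exact hz0 (hz.eq_zero_of_eq_zero_of_deriv_eq_zero hq (by nlinarith) (by nlinarith))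
  refine ⟨(z t₀ * w t₀ + deriv z t₀ * deriv w t₀) / (z t₀ ^ 2 + deriv z t₀ ^ 2),
    hw.eq_of_eq_of_deriv_eq hq (hz.const_smul _) (t₀ := t₀) ?_ ?_⟩
  · simp only [wronskian] at hW
    simp only [Pi.smul_apply, smul_eq_mul]
    field_simp
    linear_combination (-deriv z t₀) * hW
  · rw [((hz.hasDerivAt t₀).const_smul _).deriv]
    simp only [wronskian] at hW
    simp only [smul_eq_mul]
    field_simp
    linear_combination z t₀ * hW

theorem exists_pos_of_ne_zero {s : Set ℝ} (hz : IsSolution q z) (hs : IsPreconnected s)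
    (h : ∀ t ∈ s, z t ≠ 0) : ∃ v, IsSolution q v ∧ (∀ t, |v t| = |z t|) ∧ ∀ t ∈ s, 0 < v t := by
  rcases hs.forall_pos_or_forall_neg hz.continuous.continuousOn h with hpos | hneg
  · exact ⟨z, hz, fun _ => rfl, hpos⟩
  · exact ⟨-z, hz.neg, fun t => abs_neg _, fun t ht => neg_pos.2 (hneg t ht)⟩

theorem exists_zero_mem_Ioo {ω : ℝ} (hω : 0 < ω) (hq : ∀ t, ω ^ 2 < q t)
    (hz : IsSolution q z) (c : ℝ) : ∃ t ∈ Ioo c (c + π / ω), z t = 0 := by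
  by_contra! h
  obtain ⟨v, hv, -, hvpos⟩ := hz.exists_pos_of_ne_zero isPreconnected_Ioo h
  refine sturm_comparison (q₁ := fun _ => ω ^ 2) (by simp [hω, pi_pos])
    (hasDerivAt_sin_mul_sub ω c) (hasDerivAt_mul_cos_mul_sub ω c) hv.hasDerivAt hv.hasDerivAt_deriv
    (fun t _ => hq t) (by simp) ?_ (fun t ht => sin_mul_sub_pos hω ht) hvpos
  rw [add_sub_cancel_left, mul_div_cancel₀ _ hω.ne', sin_pi]

theorem sub_lt_of_sq_lt {ω c d : ℝ} (hω : 0 < ω) (hq : ∀ t, ω ^ 2 < q t)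
    (hz : IsSolution q z) (h : ∀ t ∈ Ioo c d, z t ≠ 0) : d - c < π / ω := by
  by_contra! hle
  obtain ⟨t, ht, hzt⟩ := hz.exists_zero_mem_Ioo hω hq c
  exact h t ⟨ht.1, by linarith [ht.2]⟩ hzt

theorem lt_sub_of_lt_sq {Ω c d : ℝ} (hΩ : 0 < Ω) (hq : ∀ t, q t < Ω ^ 2)
    (hz : IsSolution q z) (hcd : c < d) (hc : z c = 0) (hd : z d = 0)
    (h : ∀ t ∈ Ioo c d, z t ≠ 0) : π / Ω < d - c := by
  by_contra! hle
  obtain ⟨u, hu, habs, hupos⟩ := hz.exists_pos_of_ne_zero isPreconnected_Ioo h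
  exact sturm_comparison (q₂ := fun _ => Ω ^ 2) hcd hu.hasDerivAt hu.hasDerivAt_deriv
    (hasDerivAt_sin_mul_sub Ω c) (hasDerivAt_mul_cos_mul_sub Ω c) (fun t _ => hq t)
    (abs_eq_zero.1 (by rw [habs, hc, abs_zero])) (abs_eq_zero.1 (by rw [habs, hd, abs_zero]))
    hupos fun t ht => sin_mul_sub_pos hΩ ⟨ht.1, by linarith [ht.2]⟩

theorem exists_isLeast_zero_inter_Ioi (hz : IsSolution q z) (hq : Continuous q) (hz0 : z ≠ 0)
    {x : ℝ} (hx : z x = 0) (hne : (z ⁻¹' {0} ∩ Ioi x).Nonempty) :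
    ∃ y, IsLeast (z ⁻¹' {0} ∩ Ioi x) y :=
  (isClosed_singleton.preimage hz.continuous).exists_isLeast_inter_Ioi
    (((hz.hasDerivAt x).eventually_ne fun h =>
      hz0 (hz.eq_zero_of_eq_zero_of_deriv_eq_zero hq hx h)).filter_mono (nhdsGT_le_nhdsNE x)) hne

theorem eq_zero_of_floquet {T c : ℝ} {n : ℕ} (hT : 0 < T) (hq : Continuous q)
    (hp : Periodic q T) (hlow : ∀ t, (n * π / T) ^ 2 < q t)
    (hhigh : ∀ t, q t < ((n + 1) * π / T) ^ 2) (hz : IsSolution q z)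
    (hfl : ∀ t, z (t + T) = c * z t) : z = 0 := by
  by_contra hz0
  set Z := z ⁻¹' {0}
  have hZT : ∀ x ∈ Z, x + T ∈ Z := fun x hx => by
    rw [mem_preimage, mem_singleton_iff] at hx ⊢
    rw [hfl, hx, mul_zero]
  obtain ⟨η, hη, hqη⟩ := hp.exists_pos_add_lt_and_lt_sub hT.ne' hq fun t => ⟨hlow t, hhigh t⟩
  obtain ⟨x₀, -, hx₀⟩ := hz.exists_zero_mem_Ioo (sqrt_pos.2 hη)
    (fun t => by rw [sq_sqrt hη.le]; linarith [(hqη t).1, sq_nonneg (n * π / T)]) 0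
  have hsucc : ∀ x ∈ Z, ∃ y, IsLeast (Z ∩ Ioi x) y := fun x hx =>
    hz.exists_isLeast_zero_inter_Ioi hq hz0 hx ⟨x + T, hZT x hx, by simp [hT]⟩
  have hno : ∀ x y, IsLeast (Z ∩ Ioi x) y → ∀ t ∈ Ioo x y, z t ≠ 0 :=
    fun x y hy t ht hzt => (hy.2 ⟨hzt, ht.1⟩).not_gt ht.2
  have hlower : ∀ x ∈ Z, ∀ y, IsLeast (Z ∩ Ioi x) y → T / (n + 1) < y - x := fun x hx y hy => by
    have := hz.lt_sub_of_lt_sq (by positivity) hhigh hy.1.2 hx hy.1.1 (hno x y hy)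
    rwa [div_div_eq_mul_div, show π * T / ((n + 1) * π) = T / (n + 1) by field_simp] at this
  rcases n.eq_zero_or_pos with rfl | hn
  · obtain ⟨y, hy⟩ := hsucc x₀ hx₀
    have hyT : y ≤ x₀ + T := hy.2 ⟨hZT x₀ hx₀, by simp [hT]⟩
    have := hlower x₀ hx₀ y hy
    rw [Nat.cast_zero, zero_add, div_one] at this
    linarith
  have hupper : ∀ x ∈ Z, ∀ y, IsLeast (Z ∩ Ioi x) y → y - x < T / n := fun x _ y hy => by
    have := hz.sub_lt_of_sq_lt (by positivity) hlow (hno x y hy)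
    rwa [div_div_eq_mul_div, show π * T / (n * π) = T / n by field_simp] at this
  obtain ⟨m, -, hlo, hhi⟩ := exists_nat_mul_lt_sub_lt_mul (by positivity) hsucc
    (fun x hx y hy => ⟨hlower x hx y hy, hupper x hx y hy⟩) hx₀ (hZT x₀ hx₀) (by simp [hT])
  rw [add_sub_cancel_left, ← mul_div_assoc, div_lt_iff₀ (by positivity)] at hlo
  rw [add_sub_cancel_left, ← mul_div_assoc, lt_div_iff₀ (by positivity)] at hhi
  have h₁ : (m : ℝ) < n + 1 := by nlinarith
  have h₂ : (n : ℝ) < m := by nlinarith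
  norm_cast at h₁ h₂
  omega

theorem exists_recurrence {T : ℝ} (hq : Continuous q) (hp : Periodic q T)
    (hz : IsSolution q z) (hfl : ∀ c : ℝ, (∀ t, z (t + T) = c * z t) → z = 0) :
    ∃ b : ℝ, ∀ t, z (t + T + T) = b * z (t + T) - z t := by
  set w := fun t => z (t + T)
  have hw : IsSolution q w := hz.comp_add_const hp
  by_cases hD : wronskian z w 0 = 0
  · have hz0 : z = 0 := by
      by_contra hz0
      obtain ⟨c, hc⟩ := hz.exists_eq_smul_of_wronskian_eq_zero hq hw hz0 hD
      exact hz0 (hfl c fun t => congrFun hc t)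
    exact ⟨0, fun t => by simp [hz0]⟩
  · have hy := hz.eq_wronskian_div_smul_add hq hw (hw.comp_add_const hp) hD
    have ha : wronskian (fun t => w (t + T)) w 0 = -wronskian z w 0 := by
      change wronskian (fun t => w (t + T)) (fun t => z (t + T)) 0 = _
      rw [wronskian_comp_add_const, zero_add, hz.wronskian_eq hw 0 T]
      simp only [wronskian]
      ring
    refine ⟨wronskian z (fun t => w (t + T)) 0 / wronskian z w 0, fun t => ?_⟩
    have := congrFun hy t
    rw [ha, neg_div, div_self hD] at this
    simp only [Pi.add_apply, Pi.smul_apply, smul_eq_mul] at this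
    linarith

theorem exists_abs_le_of_forall_floquet_eq_zero {T : ℝ} (hT : T ≠ 0)
    (hq : Continuous q) (hp : Periodic q T)
    (hfl : ∀ (y : ℝ → ℝ) (c : ℝ), IsSolution q y → (∀ t, y (t + T) = c * y t) → y = 0)
    (hz : IsSolution q z) : ∃ C, ∀ t, |z t| ≤ C := by
  obtain ⟨b, hrec⟩ := hz.exists_recurrence hq hp (hfl z · hz)
  rcases lt_or_ge (b ^ 2) 4 with hb | hb
  · exact exists_abs_le_of_recurrence hT hz.continuous hb hrec
  obtain ⟨μ, c, hμc⟩ := exists_floquet_of_recurrence hb hrec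
  have hg := hfl _ c ((hz.comp_add_const hp).sub (hz.const_smul μ)) fun t => by
    simpa using hμc t
  have hz0 : z = 0 := hfl z μ hz fun t => by simpa [sub_eq_zero] using congrFun hg t
  exact ⟨0, fun t => by simp [hz0]⟩

theorem exists_abs_le_of_zhukovskii {T : ℝ} {n : ℕ} (hT : 0 < T) (hq : Continuous q)
    (hp : Periodic q T) (hlow : ∀ t, (n * π / T) ^ 2 < q t)
    (hhigh : ∀ t, q t < ((n + 1) * π / T) ^ 2) (hz : IsSolution q z) : ∃ C, ∀ t, |z t| ≤ C :=
  hz.exists_abs_le_of_forall_floquet_eq_zero hT.ne' hq hp fun _ _ hy hfl =>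
    hy.eq_zero_of_floquet hT hq hp hlow hhigh hfl

end IsSolution

end Hill

/-- **Zhukovskii stability test for the Hill equation.** If `q : ℝ → ℝ` is continuous,
`T`-periodic and `n²π²/T² < q(t) < (n+1)²π²/T²` for all `t`, then the Hill equation
`z'' + q(t) z = 0` is strongly stable; in particular every `C²` solution is bounded on `ℝ`. -/
theorem zhukovskii_stability_test
    (T : ℝ) (hT : 0 < T) (n : ℕ) (q : ℝ → ℝ) (hq : Continuous q)
    (hper : ∀ t, q (t + T) = q t)
    (hlow : ∀ t, (n : ℝ) ^ 2 * Real.pi ^ 2 / T ^ 2 < q t)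
    (hhigh : ∀ t, q t < ((n : ℝ) + 1) ^ 2 * Real.pi ^ 2 / T ^ 2) :
    StronglyStableHill T q ∧
      ∀ z : ℝ → ℝ, ContDiff ℝ 2 z → (∀ t, deriv (deriv z) t + q t * z t = 0) →
        ∃ C, ∀ t, |z t| ≤ C := by
  have hbounded : ∀ q' : ℝ → ℝ, Continuous q' → Periodic q' T →
      (∀ t, (n * π / T) ^ 2 < q' t ∧ q' t < ((n + 1) * π / T) ^ 2) →
      ∀ z : ℝ → ℝ, ContDiff ℝ 2 z → (∀ t, deriv (deriv z) t + q' t * z t = 0) →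
        ∃ C, ∀ t, |z t| ≤ C := fun q' hq' hp' hgap z hz heq =>
    Hill.IsSolution.exists_abs_le_of_zhukovskii hT hq' hp' (fun t => (hgap t).1)
      (fun t => (hgap t).2) ⟨hz, heq⟩
  have hgap : ∀ t, (n * π / T) ^ 2 < q t ∧ q t < ((n + 1) * π / T) ^ 2 := fun t => by
    simp only [div_pow, mul_pow]
    exact ⟨hlow t, hhigh t⟩
  obtain ⟨η, hη, hqη⟩ := Periodic.exists_pos_add_lt_and_lt_sub hper hT.ne' hq hgap
  refine ⟨⟨hbounded q hq hper hgap, η, hη, fun q' hq' hp' hclose => hbounded q' hq' hp' ?_⟩,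
    hbounded q hq hper hgap⟩
  intro t
  have := abs_lt.1 (hclose t)
  have := hqη t
  constructor <;> linarith
end

section
/- Let g, H₀, M, m, s₀, L > 0. Then there exists a unique function s ∈ C²([0, L]) satisfying the cable shape boundary value problem H₀·s''(x) = (M/2 + m·√(1 + s'(x)²))·g for all x ∈ (0, L), with boundary conditions s(0) = s(L) = s₀. -/
/-!
With `v = s'` the equation is the autonomous first-order equation `v' = F v`, where
`F t = (M/2 + m √(1 + t²)) g / H₀` is continuous, positive, even and of linear growth.
Separating variables, `G u = ∫₀ᵘ 1/F` is an odd increasing bijection of `ℝ` (linear growth makes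
it grow like a logarithm), so every solution on an interval is a translate `x ↦ φ (x + d)` of the
odd function `φ = G⁻¹`. Hence `s x = s₀ + ∫₀ˣ φ (t + d)`, and `s L = s₀` says that
`∫₀ᴸ φ (t + d) dt = 0`; this integral is strictly increasing in `d` and, `φ` being odd, vanishes
exactly at `d = -L/2`.
-/

open Set Filter Topology intervalIntegral

theorem Function.Odd.intervalIntegral_neg_self {f : ℝ → ℝ} (hf : f.Odd) (a : ℝ) :
    ∫ x in -a..a, f x = 0 := by
  have h := integral_comp_neg (a := -a) (b := a) f
  simp only [hf _, intervalIntegral.integral_neg, neg_neg] at h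
  linarith

theorem strictMono_intervalIntegral_comp_add {f : ℝ → ℝ} (hf : Continuous f)
    (hmono : StrictMono f) {a b : ℝ} (hab : a < b) :
    StrictMono fun d => ∫ x in a..b, f (x + d) := fun d e hde =>
  integral_lt_integral_of_continuousOn_of_le_of_exists_lt hab (by fun_prop) (by fun_prop)
    (fun _ _ => hmono.monotone (by linarith)) ⟨a, left_mem_Icc.2 hab.le, hmono (by linarith)⟩

noncomputable def invIntegral (F : ℝ → ℝ) (u : ℝ) : ℝ := ∫ t in (0 : ℝ)..u, (F t)⁻¹

section InvIntegral

variable {F : ℝ → ℝ}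

theorem hasDerivAt_invIntegral (hF : Continuous F) (hF0 : ∀ t, F t ≠ 0) (u : ℝ) :
    HasDerivAt (invIntegral F) (F u)⁻¹ u :=
  ((hF.inv₀ hF0).integral_hasStrictDerivAt 0 u).hasDerivAt

theorem strictMono_invIntegral (hF : Continuous F) (hpos : ∀ t, 0 < F t) :
    StrictMono (invIntegral F) :=
  strictMono_of_hasDerivAt_pos (hasDerivAt_invIntegral hF fun t => (hpos t).ne')
    fun t => inv_pos.2 (hpos t)

theorem Function.Even.invIntegral_odd (hF : F.Even) : (invIntegral F).Odd := by
  intro u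
  have h := integral_comp_neg (a := 0) (b := u) fun t => (F t)⁻¹
  simp only [hF _, neg_zero] at h
  rw [invIntegral, invIntegral, integral_symm, ← h]

theorem log_add_one_div_le_invIntegral {c : ℝ} (hF : Continuous F) (hpos : ∀ t, 0 < F t)
    (hgrowth : ∀ t, 0 ≤ t → F t ≤ c * (t + 1)) {u : ℝ} (hu : 0 ≤ u) :
    Real.log (u + 1) / c ≤ invIntegral F u := by
  have hc : 0 < c := by simpa using (hpos 0).trans_le (hgrowth 0 le_rfl)
  have hlog : ∫ t in (0 : ℝ)..u, (c * (t + 1))⁻¹ = Real.log (u + 1) / c := by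
    simp only [mul_inv, intervalIntegral.integral_const_mul, integral_comp_add_right
      (fun t => t⁻¹), zero_add, integral_inv_of_pos one_pos (by linarith : 0 < u + 1), div_one]
    ring
  rw [← hlog]
  refine integral_mono_on hu ?_ ((hF.inv₀ fun t => (hpos t).ne').intervalIntegrable _ _)
    fun t ht => inv_anti₀ (hpos t) (hgrowth t ht.1)
  refine ContinuousOn.intervalIntegrable_of_Icc hu
    (ContinuousOn.inv₀ (by fun_prop) fun t ht => ?_)
  exact (mul_pos hc (by linarith [ht.1])).ne'

theorem tendsto_invIntegral_atTop {c : ℝ} (hF : Continuous F) (hpos : ∀ t, 0 < F t)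
    (hgrowth : ∀ t, 0 ≤ t → F t ≤ c * (t + 1)) : Tendsto (invIntegral F) atTop atTop := by
  have hc : 0 < c := by simpa using (hpos 0).trans_le (hgrowth 0 le_rfl)
  refine tendsto_atTop_mono' _ (eventually_atTop.2 ⟨0, fun u hu =>
    log_add_one_div_le_invIntegral hF hpos hgrowth hu⟩) ?_
  exact (Real.tendsto_log_atTop.comp (tendsto_atTop_add_const_right _ 1 tendsto_id)).atTop_div_const
    hc

theorem surjective_invIntegral {c : ℝ} (hF : Continuous F) (hpos : ∀ t, 0 < F t)
    (heven : F.Even) (hgrowth : ∀ t, 0 ≤ t → F t ≤ c * (t + 1)) :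
    Function.Surjective (invIntegral F) := by
  have htop := tendsto_invIntegral_atTop hF hpos hgrowth
  have hbot : Tendsto (invIntegral F) atBot atBot := by
    have h : invIntegral F = fun u => -invIntegral F (-u) := by
      funext u; rw [heven.invIntegral_odd, neg_neg]
    rw [h]
    exact tendsto_neg_atTop_atBot.comp (htop.comp tendsto_neg_atBot_atTop)
  have hcont : Continuous (invIntegral F) := continuous_iff_continuousAt.2 fun u =>
    (hasDerivAt_invIntegral hF (fun t => (hpos t).ne') u).continuousAt
  exact hcont.surjective htop hbot

end InvIntegral

/-- The solution of `v' = F v`, `v 0 = 0`, by separation of variables. -/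
noncomputable def flowFromZero (F : ℝ → ℝ) : ℝ → ℝ := Function.invFun (invIntegral F)

section FlowFromZero

variable {F : ℝ → ℝ}

theorem invIntegral_flowFromZero (hsurj : Function.Surjective (invIntegral F)) (y : ℝ) :
    invIntegral F (flowFromZero F y) = y :=
  Function.rightInverse_invFun hsurj y

theorem flowFromZero_invIntegral (hF : Continuous F) (hpos : ∀ t, 0 < F t) (u : ℝ) :
    flowFromZero F (invIntegral F u) = u :=
  Function.leftInverse_invFun (strictMono_invIntegral hF hpos).injective u

theorem strictMono_flowFromZero (hF : Continuous F) (hpos : ∀ t, 0 < F t)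
    (hsurj : Function.Surjective (invIntegral F)) : StrictMono (flowFromZero F) := fun a b hab =>
  (strictMono_invIntegral hF hpos).lt_iff_lt.1 <| by
    rwa [invIntegral_flowFromZero hsurj, invIntegral_flowFromZero hsurj]

theorem continuous_flowFromZero (hF : Continuous F) (hpos : ∀ t, 0 < F t)
    (hsurj : Function.Surjective (invIntegral F)) : Continuous (flowFromZero F) :=
  (strictMono_flowFromZero hF hpos hsurj).monotone.continuous_of_surjective fun u =>
    ⟨_, flowFromZero_invIntegral hF hpos u⟩

theorem hasDerivAt_flowFromZero (hF : Continuous F) (hpos : ∀ t, 0 < F t)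
    (hsurj : Function.Surjective (invIntegral F)) (y : ℝ) :
    HasDerivAt (flowFromZero F) (F (flowFromZero F y)) y := by
  simpa using
    (hasDerivAt_invIntegral hF (fun t => (hpos t).ne') (flowFromZero F y)).of_local_left_inverse
    (continuous_flowFromZero hF hpos hsurj).continuousAt (inv_ne_zero (hpos _).ne')
    (Eventually.of_forall (invIntegral_flowFromZero hsurj))

theorem contDiff_flowFromZero (hF : Continuous F) (hpos : ∀ t, 0 < F t)
    (hsurj : Function.Surjective (invIntegral F)) : ContDiff ℝ 1 (flowFromZero F) := by
  have hderiv := hasDerivAt_flowFromZero hF hpos hsurj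
  refine contDiff_one_iff_deriv.2 ⟨fun y => (hderiv y).differentiableAt, ?_⟩
  rw [funext fun y => (hderiv y).deriv]
  exact hF.comp (continuous_flowFromZero hF hpos hsurj)

theorem Function.Even.flowFromZero_odd (heven : F.Even) (hF : Continuous F) (hpos : ∀ t, 0 < F t)
    (hsurj : Function.Surjective (invIntegral F)) : (flowFromZero F).Odd := fun y =>
  (strictMono_invIntegral hF hpos).injective <| by
    rw [heven.invIntegral_odd, invIntegral_flowFromZero hsurj, invIntegral_flowFromZero hsurj]

theorem integral_flowFromZero_sub_half (heven : F.Even) (hF : Continuous F)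
    (hpos : ∀ t, 0 < F t) (hsurj : Function.Surjective (invIntegral F)) (L : ℝ) :
    ∫ t in (0 : ℝ)..L, flowFromZero F (t - L / 2) = 0 := by
  rw [integral_comp_sub_right, zero_sub, show L - L / 2 = L / 2 by ring]
  exact (heven.flowFromZero_odd hF hpos hsurj).intervalIntegral_neg_self _

theorem exists_eqOn_flowFromZero_comp_add (hF : Continuous F) (hpos : ∀ t, 0 < F t) {v : ℝ → ℝ}
    {a b : ℝ} (hv : ∀ x ∈ Ioo a b, HasDerivAt v (F (v x)) x) :
    ∃ d, EqOn v (fun x => flowFromZero F (x + d)) (Ioo a b) := by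
  have hGv : ∀ x ∈ Ioo a b, HasDerivAt (invIntegral F ∘ v) 1 x := fun x hx => by
    simpa [inv_mul_cancel₀ (hpos (v x)).ne'] using
      (hasDerivAt_invIntegral hF (fun t => (hpos t).ne') (v x)).comp x (hv x hx)
  obtain ⟨d, hd⟩ := isOpen_Ioo.exists_eq_add_of_deriv_eq isPreconnected_Ioo
    (fun x hx => (hGv x hx).differentiableAt.differentiableWithinAt)
    differentiableOn_id fun x hx => by simp [(hGv x hx).deriv]
  refine ⟨d, fun x hx => ?_⟩
  rw [← flowFromZero_invIntegral hF hpos (v x)]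
  exact congrArg (flowFromZero F) (hd hx)

end FlowFromZero

def IsBVPSolution (F : ℝ → ℝ) (L s₀ : ℝ) (s : ℝ → ℝ) : Prop :=
  ContDiffOn ℝ 2 s (Icc 0 L) ∧
    (∀ x ∈ Ioo 0 L,
      derivWithin (derivWithin s (Icc 0 L)) (Icc 0 L) x = F (derivWithin s (Icc 0 L) x)) ∧
    s 0 = s₀ ∧ s L = s₀

noncomputable def bvpSolution (F : ℝ → ℝ) (L s₀ x : ℝ) : ℝ :=
  s₀ + ∫ t in (0 : ℝ)..x, flowFromZero F (t - L / 2)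

section BVP

variable {F : ℝ → ℝ} {L s₀ : ℝ}

theorem isBVPSolution_bvpSolution (heven : F.Even) (hF : Continuous F) (hpos : ∀ t, 0 < F t)
    (hsurj : Function.Surjective (invIntegral F)) (hL : 0 < L) :
    IsBVPSolution F L s₀ (bvpSolution F L s₀) := by
  set v := fun x => flowFromZero F (x - L / 2)
  have hv_cont : Continuous v :=
    (continuous_flowFromZero hF hpos hsurj).comp (continuous_sub_right _)
  have hs : ∀ x, HasDerivAt (bvpSolution F L s₀) (v x) x := fun x =>
    (hv_cont.integral_hasStrictDerivAt 0 x).hasDerivAt.const_add s₀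
  have hv : ∀ x, HasDerivAt v (F (v x)) x := fun x => by
    simpa using (hasDerivAt_flowFromZero hF hpos hsurj (x - L / 2)).comp_sub_const x (L / 2)
  have hUD := uniqueDiffOn_Icc hL
  have hdw : EqOn (derivWithin (bvpSolution F L s₀) (Icc 0 L)) v (Icc 0 L) := fun x hx =>
    (hs x).hasDerivWithinAt.derivWithin (hUD x hx)
  refine ⟨?_, fun x hx => ?_, by simp [bvpSolution], ?_⟩
  · refine ContDiff.contDiffOn ?_
    rw [show (2 : WithTop ℕ∞) = 1 + 1 by norm_num, contDiff_succ_iff_deriv,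
      funext fun x => (hs x).deriv]
    exact ⟨fun x => (hs x).differentiableAt, by simp,
      (contDiff_flowFromZero hF hpos hsurj).comp (contDiff_id.sub contDiff_const)⟩
  · have hx' := Ioo_subset_Icc_self hx
    rw [derivWithin_congr hdw (hdw hx'), (hv x).hasDerivWithinAt.derivWithin (hUD x hx'), hdw hx']
  · simp [bvpSolution, integral_flowFromZero_sub_half heven hF hpos hsurj]

theorem IsBVPSolution.exists_eq_integral {s : ℝ → ℝ} (hF : Continuous F) (hpos : ∀ t, 0 < F t)
    (hsurj : Function.Surjective (invIntegral F)) (hL : 0 < L) (hs : IsBVPSolution F L s₀ s) :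
    ∃ d, ∀ x ∈ Icc 0 L, s x = s₀ + ∫ t in (0 : ℝ)..x, flowFromZero F (t + d) := by
  obtain ⟨hC2, hode, hs0, -⟩ := hs
  set u := derivWithin s (Icc 0 L)
  have hnhds : ∀ x ∈ Ioo 0 L, Icc 0 L ∈ 𝓝 x := fun x hx => Icc_mem_nhds hx.1 hx.2
  have hs' : ∀ x ∈ Ioo 0 L, HasDerivAt s (u x) x := fun x hx =>
    (hC2.differentiableOn (by norm_num) x (Ioo_subset_Icc_self hx)).hasDerivWithinAt.hasDerivAt
      (hnhds x hx)
  have hu' : ∀ x ∈ Ioo 0 L, HasDerivAt u (F (u x)) x := fun x hx => by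
    rw [← hode x hx]
    have hu : ContDiffOn ℝ 1 u (Icc 0 L) := hC2.derivWithin (uniqueDiffOn_Icc hL) (by norm_num)
    exact (hu.differentiableOn (by norm_num) x (Ioo_subset_Icc_self hx)).hasDerivWithinAt.hasDerivAt
      (hnhds x hx)
  obtain ⟨d, hd⟩ := exists_eqOn_flowFromZero_comp_add hF hpos hu'
  have hcont : Continuous fun t => flowFromZero F (t + d) :=
    (continuous_flowFromZero hF hpos hsurj).comp (continuous_add_const d)
  refine ⟨d, fun x hx => ?_⟩
  rw [integral_eq_sub_of_hasDerivAt_of_le hx.1 (hC2.continuousOn.mono (Icc_subset_Icc_right hx.2))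
    (fun t ht => ?_) (hcont.intervalIntegrable _ _), hs0]
  · ring
  · have htL : t ∈ Ioo 0 L := ⟨ht.1, ht.2.trans_le hx.2⟩
    simpa only [hd htL] using hs' t htL

theorem IsBVPSolution.eqOn_bvpSolution {s : ℝ → ℝ} (heven : F.Even) (hF : Continuous F)
    (hpos : ∀ t, 0 < F t) (hsurj : Function.Surjective (invIntegral F)) (hL : 0 < L)
    (hs : IsBVPSolution F L s₀ s) : EqOn s (bvpSolution F L s₀) (Icc 0 L) := by
  obtain ⟨d, hd⟩ := hs.exists_eq_integral hF hpos hsurj hL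
  have hd' : d = -(L / 2) := by
    refine (strictMono_intervalIntegral_comp_add (continuous_flowFromZero hF hpos hsurj)
      (strictMono_flowFromZero hF hpos hsurj) hL).injective ?_
    have hsL := hd L (right_mem_Icc.2 hL.le)
    rw [hs.2.2.2] at hsL
    simp only [← sub_eq_add_neg, integral_flowFromZero_sub_half heven hF hpos hsurj]
    linarith
  intro x hx
  rw [hd x hx, hd', bvpSolution]
  simp only [sub_eq_add_neg]

end BVP

noncomputable def cableRhs (g H₀ M m t : ℝ) : ℝ := (M / 2 + m * √(1 + t ^ 2)) * g / H₀

section Cable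

variable {g H₀ M m : ℝ}

theorem continuous_cableRhs : Continuous (cableRhs g H₀ M m) := by
  unfold cableRhs; fun_prop

theorem cableRhs_pos (hg : 0 < g) (hH₀ : 0 < H₀) (hM : 0 < M) (hm : 0 < m) (t : ℝ) :
    0 < cableRhs g H₀ M m t := by
  unfold cableRhs; positivity

theorem cableRhs_even : (cableRhs g H₀ M m).Even := fun t => by
  simp [cableRhs]

theorem cableRhs_le_mul_add_one (hg : 0 < g) (hH₀ : 0 < H₀) (hM : 0 < M) (hm : 0 < m) {t : ℝ}
    (ht : 0 ≤ t) :
    cableRhs g H₀ M m t ≤ (M / 2 + m) * g / H₀ * (t + 1) := by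
  have hsqrt : √(1 + t ^ 2) ≤ t + 1 :=
    Real.sqrt_le_iff.2 ⟨by linarith, by nlinarith⟩
  rw [cableRhs, div_mul_eq_mul_div, div_le_div_iff_of_pos_right hH₀, mul_right_comm]
  gcongr
  nlinarith

theorem mul_eq_iff_eq_cableRhs (hH₀ : H₀ ≠ 0) (a b : ℝ) :
    H₀ * a = (M / 2 + m * √(1 + b ^ 2)) * g ↔ a = cableRhs g H₀ M m b := by
  rw [cableRhs, eq_div_iff hH₀, mul_comm]

end Cable

theorem cable_shape_exists_unique_general
    (g H₀ M m s₀ L : ℝ)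
    (hg : 0 < g) (hH₀ : 0 < H₀) (hM : 0 < M) (hm : 0 < m) (hL : 0 < L) :
    ∃ s : ℝ → ℝ,
      (ContDiffOn ℝ 2 s (Set.Icc 0 L) ∧
        (∀ x ∈ Set.Ioo 0 L,
          H₀ * derivWithin (derivWithin s (Set.Icc 0 L)) (Set.Icc 0 L) x
            = (M / 2 + m * Real.sqrt (1 + derivWithin s (Set.Icc 0 L) x ^ 2)) * g) ∧
        s 0 = s₀ ∧ s L = s₀) ∧
      ∀ s2 : ℝ → ℝ,
        (ContDiffOn ℝ 2 s2 (Set.Icc 0 L) ∧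
          (∀ x ∈ Set.Ioo 0 L,
            H₀ * derivWithin (derivWithin s2 (Set.Icc 0 L)) (Set.Icc 0 L) x
              = (M / 2 + m * Real.sqrt (1 + derivWithin s2 (Set.Icc 0 L) x ^ 2)) * g) ∧
          s2 0 = s₀ ∧ s2 L = s₀) →
        Set.EqOn s s2 (Set.Icc 0 L) := by
  have hF := continuous_cableRhs (g := g) (H₀ := H₀) (M := M) (m := m)
  have hpos := cableRhs_pos hg hH₀ hM hm
  have hsurj := surjective_invIntegral hF hpos cableRhs_even fun _ =>
    cableRhs_le_mul_add_one hg hH₀ hM hm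
  simp only [mul_eq_iff_eq_cableRhs hH₀.ne']
  exact ⟨bvpSolution _ L s₀, isBVPSolution_bvpSolution cableRhs_even hF hpos hsurj hL,
    fun s hs => (IsBVPSolution.eqOn_bvpSolution cableRhs_even hF hpos hsurj hL hs).symm⟩

/-- **Existence and uniqueness of the cable shape.** For positive constants
`g, H₀, M, m, s₀, L` there is a unique `s ∈ C²([0,L])` with
`H₀ s'' = (M/2 + m√(1+s'²)) g` on `(0,L)` and `s(0) = s(L) = s₀`
(uniqueness meaning any two solutions agree on `[0,L]`). -/
theorem cable_shape_exists_unique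
    (g H₀ M m s₀ L : ℝ)
    (hg : 0 < g) (hH₀ : 0 < H₀) (hM : 0 < M) (hm : 0 < m) (hs₀ : 0 < s₀) (hL : 0 < L) :
    ∃ s : ℝ → ℝ,
      (ContDiffOn ℝ 2 s (Set.Icc 0 L) ∧
        (∀ x ∈ Set.Ioo 0 L,
          H₀ * derivWithin (derivWithin s (Set.Icc 0 L)) (Set.Icc 0 L) x
            = (M / 2 + m * Real.sqrt (1 + derivWithin s (Set.Icc 0 L) x ^ 2)) * g) ∧
        s 0 = s₀ ∧ s L = s₀) ∧
      ∀ s2 : ℝ → ℝ,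
        (ContDiffOn ℝ 2 s2 (Set.Icc 0 L) ∧
          (∀ x ∈ Set.Ioo 0 L,
            H₀ * derivWithin (derivWithin s2 (Set.Icc 0 L)) (Set.Icc 0 L) x
              = (M / 2 + m * Real.sqrt (1 + derivWithin s2 (Set.Icc 0 L) x ^ 2)) * g) ∧
          s2 0 = s₀ ∧ s2 L = s₀) →
        Set.EqOn s s2 (Set.Icc 0 L) :=
  cable_shape_exists_unique_general g H₀ M m s₀ L hg hH₀ hM hm hL
end

section
/- Let g, H₀, M, m, s₀, L > 0 and let s ∈ C²([0, L]) satisfy the cable shape boundary value problem H₀·s''(x) = (M/2 + m·√(1 + s'(x)²))·g for all x ∈ (0, L), with s(0) = s(L) = s₀. Then s is symmetric with respect to the midpoint x = L/2, that is, s(L − x) = s(x) for all x ∈ [0, L]. -/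
/-!
The slope `s'` solves the autonomous equation `v' = G v` with `G` even and Lipschitz, so
`x ↦ -s' (L - x)` solves it as well. Rolle's theorem for `s x - s (L - x)` on `[0, L/2]` (it
vanishes at both ends because `s 0 = s L`) gives a point where these two solutions agree, hence
`s' (L - x) = -s' x` everywhere by uniqueness. Then `s (L - x) - s x` is constant, and it
vanishes at `x = 0`.
-/

open Set

theorem lipschitzWith_sqrt_one_add_sq : LipschitzWith 1 fun p : ℝ => √(1 + p ^ 2) := by
  have h : (fun p : ℝ => √(1 + p ^ 2)) = fun p : ℝ => ‖(1 : ℂ) + p * Complex.I‖ := by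
    funext p
    rw [← Complex.ofReal_one, Complex.norm_add_mul_I, one_pow]
  rw [h]
  refine LipschitzWith.of_dist_le_mul fun p q => ?_
  calc dist ‖(1 : ℂ) + p * Complex.I‖ ‖(1 : ℂ) + q * Complex.I‖
      ≤ ‖((1 : ℂ) + p * Complex.I) - (1 + q * Complex.I)‖ := dist_norm_norm_le _ _
    _ = 1 * dist p q := by
      rw [add_sub_add_left_eq_sub, ← sub_mul, norm_mul, Complex.norm_I, ← Complex.ofReal_sub,
        Complex.norm_real, Real.dist_eq, Real.norm_eq_abs]
      simp

theorem HasDerivAt.neg_comp_const_sub_of_even {F v : ℝ → ℝ} (hF : F.Even) {c x : ℝ}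
    (hv : HasDerivAt v (F (v (c - x))) (c - x)) :
    HasDerivAt (fun y => -v (c - y)) (F (-v (c - x))) x := by
  have h := (hv.comp_const_sub c x).neg
  rwa [neg_neg, ← hF] at h

section
variable {a b : ℝ}

theorem reflect_eq_neg_of_hasDerivAt_even {K : NNReal} {F v : ℝ → ℝ} (hF : LipschitzWith K F)
    (hF_even : F.Even) (hv : ContinuousOn v (Icc a b))
    (hv' : ∀ x ∈ Ioo a b, HasDerivAt v (F (v x)) x) {t₀ : ℝ} (ht₀ : t₀ ∈ Ioo a b)
    (h : v (a + b - t₀) = -v t₀) : ∀ x ∈ Icc a b, v (a + b - x) = -v x := by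
  have hmaps : MapsTo (fun x => a + b - x) (Icc a b) (Icc a b) := fun x hx =>
    ⟨by linarith [hx.2], by linarith [hx.1]⟩
  have hmaps' : MapsTo (fun x => a + b - x) (Ioo a b) (Ioo a b) := fun x hx =>
    ⟨by linarith [hx.2], by linarith [hx.1]⟩
  have hw : ContinuousOn (fun x => -v (a + b - x)) (Icc a b) :=
    (hv.comp (continuousOn_const.sub continuousOn_id) hmaps).neg
  have huniq := ODE_solution_unique_of_mem_Icc (v := fun _ => F) (s := fun _ => univ)
    (fun _ _ => hF.lipschitzOnWith) ht₀ hv hv' (fun _ _ => mem_univ _) hw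
    (fun x hx => (hv' _ (hmaps' hx)).neg_comp_const_sub_of_even hF_even)
    (fun _ _ => mem_univ _) (by simp [h])
  intro x hx
  linarith [show v x = -v (a + b - x) from huniq hx]

theorem reflect_eq_of_deriv_hasDerivAt_even {K : NNReal} {F s s' : ℝ → ℝ}
    (hF : LipschitzWith K F) (hF_even : F.Even) (hab : a < b)
    (hs : ∀ x ∈ Icc a b, HasDerivWithinAt s (s' x) (Icc a b) x)
    (hs' : ContinuousOn s' (Icc a b)) (hode : ∀ x ∈ Ioo a b, HasDerivAt s' (F (s' x)) x)
    (hsab : s a = s b) : ∀ x ∈ Icc a b, s (a + b - x) = s x := by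
  have hmaps : MapsTo (fun x => a + b - x) (Icc a b) (Icc a b) := fun x hx =>
    ⟨by linarith [hx.2], by linarith [hx.1]⟩
  have hreflect : ∀ x ∈ Icc a b,
      HasDerivWithinAt (fun x => s (a + b - x)) (-s' (a + b - x)) (Icc a b) x := fun x hx => by
    have h := (hs _ (hmaps hx)).comp x ((hasDerivWithinAt_id x _).const_sub (a + b)) hmaps
    rwa [mul_neg_one] at h
  obtain ⟨c, hc, hc0⟩ : ∃ c ∈ Ioo a ((a + b) / 2), s' c + s' (a + b - c) = 0 := by
    have hmid : Icc a ((a + b) / 2) ⊆ Icc a b := Icc_subset_Icc_right (by linarith)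
    refine exists_hasDerivAt_eq_zero (f := fun x => s x - s (a + b - x)) (by linarith)
      (fun x hx => ((hs x (hmid hx)).sub (hreflect x (hmid hx))).continuousWithinAt.mono hmid)
      (by rw [add_sub_cancel_left, hsab, sub_self, sub_half, sub_self]) fun x hx => ?_
    have hx' : x ∈ Ioo a b := ⟨hx.1, by linarith [hx.2]⟩
    have h := ((hs x (Ioo_subset_Icc_self hx')).sub
      (hreflect x (Ioo_subset_Icc_self hx'))).hasDerivAt (Icc_mem_nhds hx'.1 hx'.2)
    rwa [sub_neg_eq_add] at h
  have hc' : c ∈ Ioo a b := ⟨hc.1, by linarith [hc.2]⟩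
  have hodd := reflect_eq_neg_of_hasDerivAt_even hF hF_even hs' hode hc' (by linarith)
  have hconst : ∀ x ∈ Icc a b, HasDerivWithinAt (fun x => s (a + b - x) - s x) 0 (Icc a b) x :=
    fun x hx => by
      have h := (hreflect x hx).sub (hs x hx)
      rwa [hodd x hx, neg_neg, sub_self] at h
  intro x hx
  have := (convex_Icc a b).norm_image_sub_le_of_norm_hasDerivWithin_le (C := 0) hconst
    (fun _ _ => by simp) (left_mem_Icc.2 hab.le) hx
  simpa [hsab, sub_eq_zero] using this
end

theorem cable_shape_symmetric_general
    (g H₀ M m s₀ L : ℝ)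
    (hH₀ : 0 < H₀) (hL : 0 < L)
    (s s' s'' : ℝ → ℝ)
    (hs' : ∀ x ∈ Set.Icc 0 L, HasDerivWithinAt s (s' x) (Set.Icc 0 L) x)
    (hs'' : ∀ x ∈ Set.Icc 0 L, HasDerivWithinAt s' (s'' x) (Set.Icc 0 L) x)
    (hode : ∀ x ∈ Set.Ioo 0 L,
      H₀ * s'' x = (M / 2 + m * Real.sqrt (1 + s' x ^ 2)) * g)
    (h0 : s 0 = s₀) (hLend : s L = s₀) :
    ∀ x ∈ Set.Icc 0 L, s (L - x) = s x := by
  set G : ℝ → ℝ := fun p => M * g / (2 * H₀) + m * g / H₀ * √(1 + p ^ 2)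
  have hG : LipschitzWith _ G := (LipschitzWith.const _).add
    ((lipschitzWith_smul (m * g / H₀)).comp lipschitzWith_sqrt_one_add_sq)
  have hG_even : G.Even := fun p => by simp only [G, neg_sq]
  have hs'_ode : ∀ x ∈ Ioo 0 L, HasDerivAt s' (G (s' x)) x := fun x hx => by
    have hG_eq : G (s' x) = s'' x := by
      rw [eq_comm, ← mul_right_inj' hH₀.ne', hode x hx]
      simp only [G]
      field_simp
    rw [hG_eq]
    exact (hs'' x (Ioo_subset_Icc_self hx)).hasDerivAt (Icc_mem_nhds hx.1 hx.2)
  simpa using reflect_eq_of_deriv_hasDerivAt_even hG hG_even hL hs'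
    (fun x hx => (hs'' x hx).continuousWithinAt) hs'_ode (h0.trans hLend.symm)

/-- **Symmetry of the cable shape.** If `s ∈ C²([0,L])` solves the cable shape
boundary value problem `H₀ s'' = (M/2 + m√(1+s'²)) g` on `(0,L)` with
`s(0) = s(L) = s₀`, then `s` is symmetric about `x = L/2`:
`s(L − x) = s(x)` for all `x ∈ [0,L]`. -/
theorem cable_shape_symmetric
    (g H₀ M m s₀ L : ℝ)
    (hg : 0 < g) (hH₀ : 0 < H₀) (hM : 0 < M) (hm : 0 < m) (hs₀ : 0 < s₀) (hL : 0 < L)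
    (s s' s'' : ℝ → ℝ)
    (hs' : ∀ x ∈ Set.Icc 0 L, HasDerivWithinAt s (s' x) (Set.Icc 0 L) x)
    (hs'' : ∀ x ∈ Set.Icc 0 L, HasDerivWithinAt s' (s'' x) (Set.Icc 0 L) x)
    (hs''c : ContinuousOn s'' (Set.Icc 0 L))
    (hode : ∀ x ∈ Set.Ioo 0 L,
      H₀ * s'' x = (M / 2 + m * Real.sqrt (1 + s' x ^ 2)) * g)
    (h0 : s 0 = s₀) (hLend : s L = s₀) :
    ∀ x ∈ Set.Icc 0 L, s (L - x) = s x :=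
  cable_shape_symmetric_general g H₀ M m s₀ L hH₀ hL s s' s'' hs' hs'' hode h0 hLend
end

section
/- Let L > 0, H₀ ∈ ℝ, s ∈ C¹([0, L]) and set ξ(x) := √(1 + s'(x)²). Let p ∈ C¹([0, L]). Then, as ε → 0, the exact cable deformation energy admits the third-order expansion H₀·∫₀^L ξ(x)·( √(1 + (s'(x) − ε·p'(x))²) − ξ(x) ) dx = H₀·∫₀^L ( −ε·s'(x)p'(x) + ε²·p'(x)²/(2ξ(x)²) + ε³·s'(x)p'(x)³/(2ξ(x)⁴) ) dx + o(ε³). -/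
/-!
Write `f t = √(1 + t²)`, so that `ξ = f ∘ s'` and the displaced integrand is `ξ (f (s' - ε p') - ξ)`.
The fourth derivative `(12 t² - 3) / f(t)⁷` of `f` is bounded by `15` on all of `ℝ`, so Taylor's
theorem with Lagrange remainder bounds `f (a + h)` minus its cubic Taylor polynomial at `a` by
`h⁴`, uniformly in `a`. Multiplied by `ξ = f a`, that cubic polynomial at `h = -ε p'` is exactly
`ξ²` plus the three terms of the expansion, so the integrands differ by at most
`ξ p'⁴ ε⁴ ≤ K ε⁴` on `[0, L]`, with `K` a bound for the continuous function `ξ p'⁴`. The two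
integrals therefore differ by `O(ε⁴) = o(ε³)`.
-/

open Asymptotics Set Filter MeasureTheory Nat

theorem abs_sub_taylor_le_of_abs_iteratedDeriv_le {f : ℝ → ℝ} {n : ℕ} {C : ℝ}
    (hf : ContDiff ℝ (n + 1) f) (hC : ∀ y, |iteratedDeriv (n + 1) f y| ≤ C) (x₀ x : ℝ) :
    |f x - ∑ k ∈ Finset.range (n + 1), ((k ! : ℝ)⁻¹ * (x - x₀) ^ k) * iteratedDeriv k f x₀|
      ≤ C * |x - x₀| ^ (n + 1) / (n + 1)! := by
  rcases eq_or_ne x₀ x with rfl | hx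
  · simp [Finset.sum_range_succ']
  obtain ⟨x', -, hx'⟩ := taylor_mean_remainder_lagrange_iteratedDeriv hx hf.contDiffOn
  have hu : UniqueDiffOn ℝ (uIcc x₀ x) := uniqueDiffOn_uIcc hx
  have htaylor : taylorWithinEval f n (uIcc x₀ x) x₀ x
      = ∑ k ∈ Finset.range (n + 1), ((k ! : ℝ)⁻¹ * (x - x₀) ^ k) * iteratedDeriv k f x₀ := by
    rw [taylor_within_apply]
    refine Finset.sum_congr rfl fun k hk => ?_
    rw [smul_eq_mul, iteratedDerivWithin_eq_iteratedDeriv hu (hf.contDiffAt.of_le ?_) left_mem_uIcc]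
    exact_mod_cast (Finset.mem_range.mp hk).le
  rw [← htaylor, hx', abs_div, abs_mul, abs_pow, Nat.abs_cast]
  gcongr
  exact hC x'

theorem isBigO_intervalIntegral_sub_of_norm_le {α E F : Type*} [NormedAddCommGroup E]
    [NormedSpace ℝ E] [Norm F] {l : Filter α} {a b C : ℝ} {f g : α → ℝ → E} {k : α → F}
    (hf : ∀ ε, IntervalIntegrable (f ε) volume a b)
    (hg : ∀ ε, IntervalIntegrable (g ε) volume a b)
    (hfg : ∀ ε, ∀ x ∈ uIoc a b, ‖f ε x - g ε x‖ ≤ C * ‖k ε‖) :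
    (fun ε => (∫ x in a..b, f ε x) - ∫ x in a..b, g ε x) =O[l] k := by
  refine IsBigO.of_bound (C * |b - a|) (Eventually.of_forall fun ε => ?_)
  rw [← intervalIntegral.integral_sub (hf ε) (hg ε), mul_right_comm]
  exact intervalIntegral.norm_integral_le_of_norm_le_const (hfg ε)

noncomputable def sqrtOneAddSq (t : ℝ) : ℝ := √(1 + t ^ 2)

namespace sqrtOneAddSq

theorem sq_eq (t : ℝ) : sqrtOneAddSq t ^ 2 = 1 + t ^ 2 := Real.sq_sqrt (by positivity)

theorem one_le (t : ℝ) : 1 ≤ sqrtOneAddSq t := Real.one_le_sqrt.mpr (by nlinarith)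

theorem pos (t : ℝ) : 0 < sqrtOneAddSq t := one_pos.trans_le (one_le t)

theorem contDiff {n : WithTop ℕ∞} : ContDiff ℝ n sqrtOneAddSq :=
  (contDiff_const.add (contDiff_id.pow 2)).sqrt fun t => by positivity

theorem hasDerivAt (t : ℝ) : HasDerivAt sqrtOneAddSq (t / sqrtOneAddSq t) t := by
  refine (((hasDerivAt_pow 2 t).const_add 1).sqrt (by positivity)).congr_deriv ?_
  simp only [sqrtOneAddSq]
  field_simp
  norm_num

theorem iteratedDeriv_one : iteratedDeriv 1 sqrtOneAddSq = fun t => t / sqrtOneAddSq t := by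
  rw [_root_.iteratedDeriv_one]
  exact funext fun t => (hasDerivAt t).deriv

theorem iteratedDeriv_two :
    iteratedDeriv 2 sqrtOneAddSq = fun t => 1 / sqrtOneAddSq t ^ 3 := by
  rw [iteratedDeriv_succ, iteratedDeriv_one]
  refine funext fun t => ((hasDerivAt_id t).div (hasDerivAt t) (pos t).ne').deriv.trans ?_
  simp only [id]
  field_simp [(pos t).ne']
  linear_combination sq_eq t

theorem iteratedDeriv_three :
    iteratedDeriv 3 sqrtOneAddSq = fun t => -3 * t / sqrtOneAddSq t ^ 5 := by
  rw [iteratedDeriv_succ, iteratedDeriv_two]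
  refine funext fun t =>
    ((hasDerivAt_const t 1).div ((hasDerivAt t).pow 3) (pow_ne_zero 3 (pos t).ne')).deriv.trans ?_
  simp only [Pi.pow_apply]
  field_simp [(pos t).ne']
  ring

theorem iteratedDeriv_four :
    iteratedDeriv 4 sqrtOneAddSq = fun t => (12 * t ^ 2 - 3) / sqrtOneAddSq t ^ 7 := by
  rw [iteratedDeriv_succ, iteratedDeriv_three]
  refine funext fun t => (((hasDerivAt_id t).const_mul (-3)).div ((hasDerivAt t).pow 5)
    (pow_ne_zero 5 (pos t).ne')).deriv.trans ?_
  simp only [id, Pi.pow_apply]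
  field_simp [(pos t).ne']
  linear_combination -3 * sqrtOneAddSq t ^ 4 * sq_eq t

theorem abs_iteratedDeriv_four_le (t : ℝ) : |iteratedDeriv 4 sqrtOneAddSq t| ≤ 15 := by
  have h7 := pow_pos (pos t) 7
  have h27 : sqrtOneAddSq t ^ 2 ≤ sqrtOneAddSq t ^ 7 := pow_le_pow_right₀ (one_le t) (by norm_num)
  rw [iteratedDeriv_four, abs_div, abs_of_pos h7, div_le_iff₀ h7, abs_le]
  constructor <;> nlinarith [sq_eq t, sq_nonneg t]


theorem abs_sub_taylor_le (a h : ℝ) :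
    |sqrtOneAddSq (a + h) - (sqrtOneAddSq a + h * a / sqrtOneAddSq a
        + h ^ 2 / (2 * sqrtOneAddSq a ^ 3) - h ^ 3 * a / (2 * sqrtOneAddSq a ^ 5))| ≤ h ^ 4 := by
  have hne := (pos a).ne'
  refine (congrArg _ ?_).trans_le <| (abs_sub_taylor_le_of_abs_iteratedDeriv_le (n := 3)
    contDiff abs_iteratedDeriv_four_le a (a + h)).trans ?_
  · simp only [Finset.sum_range_succ, Finset.sum_range_zero, iteratedDeriv_zero, iteratedDeriv_one,
      iteratedDeriv_two, iteratedDeriv_three, add_sub_cancel_left, Nat.factorial]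
    field_simp
    ring
  · rw [add_sub_cancel_left, (by decide : Even (3 + 1)).pow_abs]
    norm_num [Nat.factorial]
    have : 0 ≤ h ^ 4 := by positivity
    linarith

theorem abs_mul_sub_sub_le (a b ε : ℝ) :
    |sqrtOneAddSq a * (sqrtOneAddSq (a - ε * b) - sqrtOneAddSq a)
        - (-(ε * a * b) + ε ^ 2 * b ^ 2 / (2 * sqrtOneAddSq a ^ 2)
          + ε ^ 3 * a * b ^ 3 / (2 * sqrtOneAddSq a ^ 4))|
      ≤ sqrtOneAddSq a * (ε * b) ^ 4 := by
  have hpos := pos a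
  have htaylor := abs_sub_taylor_le a (-(ε * b))
  rw [← sub_eq_add_neg, (by decide : Even 4).neg_pow] at htaylor
  refine Eq.trans_le ?_ (mul_le_mul_of_nonneg_left htaylor hpos.le)
  rw [← abs_of_pos hpos, ← abs_mul, abs_of_pos hpos]
  congr 1
  field_simp
  ring

end sqrtOneAddSq

theorem cable_energy_expansion_general
    (L H₀ : ℝ) (hL : 0 < L)
    (s' p' : ℝ → ℝ)
    (hs'c : ContinuousOn s' (Set.Icc 0 L))
    (hp'c : ContinuousOn p' (Set.Icc 0 L))
    (ξ : ℝ → ℝ) (hξ : ∀ x, ξ x = Real.sqrt (1 + s' x ^ 2)) :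
    (fun ε : ℝ =>
        H₀ * (∫ x in (0 : ℝ)..L, ξ x * (Real.sqrt (1 + (s' x - ε * p' x) ^ 2) - ξ x))
          - H₀ * (∫ x in (0 : ℝ)..L,
              (-(ε * s' x * p' x) + ε ^ 2 * p' x ^ 2 / (2 * ξ x ^ 2)
                + ε ^ 3 * s' x * p' x ^ 3 / (2 * ξ x ^ 4))))
      =o[nhds 0] (fun ε : ℝ => ε ^ 3) := by
  obtain rfl : ξ = fun x => √(1 + s' x ^ 2) := funext hξ
  rw [← uIcc_of_le hL.le] at hs'c hp'c
  obtain ⟨K, hK⟩ := isCompact_uIcc.exists_bound_of_continuousOn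
    (f := fun x => √(1 + s' x ^ 2) * p' x ^ 4) (by fun_prop)
  have hremainder : (fun ε : ℝ =>
      (∫ x in (0 : ℝ)..L, √(1 + s' x ^ 2) * (√(1 + (s' x - ε * p' x) ^ 2) - √(1 + s' x ^ 2)))
        - ∫ x in (0 : ℝ)..L, (-(ε * s' x * p' x) + ε ^ 2 * p' x ^ 2 / (2 * √(1 + s' x ^ 2) ^ 2)
          + ε ^ 3 * s' x * p' x ^ 3 / (2 * √(1 + s' x ^ 2) ^ 4))) =O[nhds 0] fun ε => ε ^ 4 := by
    refine isBigO_intervalIntegral_sub_of_norm_le (C := K)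
      (fun ε => ContinuousOn.intervalIntegrable (by fun_prop))
      (fun ε => ContinuousOn.intervalIntegrable (by fun_prop (disch := intro x _; positivity)))
      fun ε x hx => ?_
    have hKx := hK x (uIoc_subset_uIcc hx)
    simp only [Real.norm_eq_abs] at hKx ⊢
    calc _ ≤ √(1 + s' x ^ 2) * (ε * p' x) ^ 4 := sqrtOneAddSq.abs_mul_sub_sub_le (s' x) (p' x) ε
      _ = |√(1 + s' x ^ 2) * p' x ^ 4| * |ε ^ 4| := by
        rw [abs_of_nonneg (by positivity), abs_of_nonneg (by positivity)]
        ring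
      _ ≤ K * |ε ^ 4| := by gcongr
  simp_rw [← mul_sub]
  exact (hremainder.const_mul_left H₀).trans_isLittleO (isLittleO_pow_pow (by norm_num))

/-- **Third-order expansion of the cable deformation energy.** With `s, p ∈ C¹([0,L])`
and `ξ = √(1+s'²)`, as `ε → 0`,
`H₀ ∫₀^L ξ (√(1+(s'−εp')²) − ξ) dx
  = H₀ ∫₀^L (−ε s'p' + ε² p'²/(2ξ²) + ε³ s'p'³/(2ξ⁴)) dx + o(ε³)`. -/
theorem cable_energy_expansion
    (L H₀ : ℝ) (hL : 0 < L)
    (s s' p p' : ℝ → ℝ)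
    (hs' : ∀ x ∈ Set.Icc 0 L, HasDerivWithinAt s (s' x) (Set.Icc 0 L) x)
    (hs'c : ContinuousOn s' (Set.Icc 0 L))
    (hp' : ∀ x ∈ Set.Icc 0 L, HasDerivWithinAt p (p' x) (Set.Icc 0 L) x)
    (hp'c : ContinuousOn p' (Set.Icc 0 L))
    (ξ : ℝ → ℝ) (hξ : ∀ x, ξ x = Real.sqrt (1 + s' x ^ 2)) :
    (fun ε : ℝ =>
        H₀ * (∫ x in (0 : ℝ)..L, ξ x * (Real.sqrt (1 + (s' x - ε * p' x) ^ 2) - ξ x))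
          - H₀ * (∫ x in (0 : ℝ)..L,
              (-(ε * s' x * p' x) + ε ^ 2 * p' x ^ 2 / (2 * ξ x ^ 2)
                + ε ^ 3 * s' x * p' x ^ 3 / (2 * ξ x ^ 4))))
      =o[nhds 0] (fun ε : ℝ => ε ^ 3) :=
  cable_energy_expansion_general L H₀ hL s' p' hs'c hp'c ξ hξ
end
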